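/- arXiv:2303.13657 — 2 statements merged into one kernel-verified Lean document; each statement's English description precedes it below -/
import Mathlib

section
/- Let $Z$ and $W$ be real random variables with $Y = Z - W$. If $W$ admits a probability density function bounded above by $L_0$, and $W$ is independent of $Y$, then $\sup_{z \in \mathbb{R}} |\mathbb{P}(Z \le z) - \mathbb{P}(W \le z)| \le L_0 \, \mathbb{E}|Y|$. -/
open MeasureTheory ProbabilityTheory
open scoped ENNReal

/-- If `W` has a density bounded by `L₀`, `Y` is integrable and independent
of `W`, and `Z = W + Y`, then the Kolmogorov distance between the CDFs of `Z` and `W`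
is at most `L₀ E|Y|`. -/
theorem stmt_7 {Ω : Type*} [MeasurableSpace Ω] (μ : Measure Ω) [IsProbabilityMeasure μ]
    (W Y Z : Ω → ℝ) (hWm : Measurable W) (hYm : Measurable Y)
    (hZ : Z = fun ω => W ω + Y ω)
    (hindep : IndepFun W Y μ) (hYint : Integrable Y μ)
    (L0 : ℝ) (f : ℝ → ℝ) (hf0 : ∀ s, 0 ≤ f s) (hfL : ∀ s, f s ≤ L0)
    (hfm : Measurable f)
    (hcdf : ∀ z, (μ {ω | W ω ≤ z}).toReal = ∫ s in Set.Iic z, f s) :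
    ∀ z : ℝ, |(μ {ω | Z ω ≤ z}).toReal - (μ {ω | W ω ≤ z}).toReal| ≤
      L0 * ∫ ω, |Y ω| ∂μ := by
  intro z
  have hL0 : 0 ≤ L0 := le_trans (hf0 0) (hfL 0)
  set F : ℝ → ℝ := fun t => (μ {ω | W ω ≤ t}).toReal with hFdef
  have hF0 : ∀ t, 0 ≤ F t := fun t => ENNReal.toReal_nonneg
  have hF1 : ∀ t, F t ≤ 1 := by
    intro t
    have : (μ {ω | W ω ≤ t}).toReal ≤ (1 : ℝ≥0∞).toReal :=
      ENNReal.toReal_mono (by simp) prob_le_one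
    simpa using this
  have hmono : Monotone F := by
    intro a b hab
    exact ENNReal.toReal_mono (measure_ne_top μ _)
      (measure_mono fun ω h => le_trans h hab)
  -- Lipschitz bound
  have hlip1 : ∀ a b : ℝ, a ≤ b → F b - F a ≤ L0 * (b - a) := by
    intro a b hab
    by_cases hint : IntegrableOn f (Set.Iic b)
    · have hint_a : IntegrableOn f (Set.Iic a) :=
        hint.mono_set (Set.Iic_subset_Iic.2 hab)
      have hint_ab : IntegrableOn f (Set.Ioc a b) :=
        hint.mono_set (fun x hx => hx.2)
      have hsplit : ∫ s in Set.Iic b, f s =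
          (∫ s in Set.Iic a, f s) + ∫ s in Set.Ioc a b, f s := by
        rw [← setIntegral_union (Set.Iic_disjoint_Ioc le_rfl) measurableSet_Ioc
          hint_a hint_ab, Set.Iic_union_Ioc_eq_Iic hab]
      have hub : ∫ s in Set.Ioc a b, f s ≤ L0 * (b - a) := by
        have hconst : IntegrableOn (fun _ : ℝ => L0) (Set.Ioc a b) :=
          integrableOn_const measure_Ioc_lt_top.ne
        calc ∫ s in Set.Ioc a b, f s ≤ ∫ _s in Set.Ioc a b, L0 :=
              setIntegral_mono_on hint_ab hconst measurableSet_Ioc (fun x _ => hfL x)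
          _ = (b - a) * L0 := by
              rw [setIntegral_const, Real.volume_real_Ioc, smul_eq_mul,
                max_eq_left (by linarith)]
          _ = L0 * (b - a) := mul_comm _ _
      calc F b - F a = ∫ s in Set.Ioc a b, f s := by
            rw [hFdef]; simp only [hcdf a, hcdf b, hsplit]; ring
        _ ≤ L0 * (b - a) := hub
    · have hb0 : F b = 0 := by
        rw [hFdef]; simp only [hcdf b]; exact integral_undef hint
      have ha0 : F a ≥ 0 := hF0 a
      nlinarith [hmono hab, hb0 ▸ hmono hab]
  have hlipAbs : ∀ a b : ℝ, |F a - F b| ≤ L0 * |a - b| := by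
    intro a b
    rcases le_total a b with hab | hab
    · rw [abs_of_nonpos (by linarith [hmono hab]), abs_of_nonpos (by linarith)]
      have := hlip1 a b hab; linarith
    · rw [abs_of_nonneg (by linarith [hmono hab]), abs_of_nonneg (by linarith)]
      have := hlip1 b a hab; linarith
  -- independence: law of Z
  set ν : Measure ℝ := μ.map Y with hνdef
  have hprob : IsProbabilityMeasure ν := Measure.isProbabilityMeasure_map hYm.aemeasurable
  have hmap : μ.map (fun ω => (Y ω, W ω)) = ν.prod (μ.map W) :=
    (indepFun_iff_map_prod_eq_prod_map_map hYm.aemeasurable hWm.aemeasurable).mp hindep.symm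
  have hs : MeasurableSet {p : ℝ × ℝ | p.2 + p.1 ≤ z} :=
    measurableSet_le (measurable_snd.add measurable_fst) measurable_const
  have hZmeas : μ {ω | Z ω ≤ z} = ∫⁻ y, μ {ω | W ω ≤ z - y} ∂ν := by
    have h1 : {ω | Z ω ≤ z} = (fun ω => (Y ω, W ω)) ⁻¹' {p | p.2 + p.1 ≤ z} := by
      ext ω; simp [hZ, add_comm]
    rw [h1, ← Measure.map_apply (hYm.prodMk hWm) hs, hmap, Measure.prod_apply hs]
    refine lintegral_congr fun y => ?_
    have h2 : Prod.mk y ⁻¹' {p : ℝ × ℝ | p.2 + p.1 ≤ z} = Set.Iic (z - y) := by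
      ext w; simp [Set.mem_Iic, le_sub_iff_add_le]
    rw [h2, Measure.map_apply hWm measurableSet_Iic]
    rfl
  -- measurability
  have hmeasF : Measurable F := hmono.measurable
  have hmeasG : Measurable fun y => F (z - y) :=
    hmeasF.comp (measurable_const.sub measurable_id)
  have hmeasμ : Measurable fun y : ℝ => μ {ω | W ω ≤ z - y} := by
    have hanti : Antitone fun y : ℝ => μ {ω | W ω ≤ z - y} := by
      intro a b hab
      exact measure_mono fun ω h => le_trans h (sub_le_sub_left hab z)
    exact hanti.measurable
  have htoReal : (μ {ω | Z ω ≤ z}).toReal = ∫ y, F (z - y) ∂ν := by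
    rw [hZmeas, ← integral_toReal hmeasμ.aemeasurable
      (ae_of_all _ fun y => measure_lt_top μ _)]
  -- integrability facts
  have hintabs : Integrable (fun y : ℝ => |y|) ν :=
    (integrable_map_measure measurable_abs.aestronglyMeasurable hYm.aemeasurable).mpr hYint.abs
  have hintG : Integrable (fun y => F (z - y)) ν := by
    refine Integrable.mono' (integrable_const (1 : ℝ)) hmeasG.aestronglyMeasurable
      (ae_of_all _ fun y => ?_)
    rw [Real.norm_eq_abs, abs_of_nonneg (hF0 _)]
    exact hF1 _
  have habsint : ∫ y, |y| ∂ν = ∫ ω, |Y ω| ∂μ :=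
    integral_map hYm.aemeasurable measurable_abs.aestronglyMeasurable
  have hgoalW : (μ {ω | W ω ≤ z}).toReal = F z := rfl
  rw [htoReal, hgoalW]
  calc |(∫ y, F (z - y) ∂ν) - F z| = |∫ y, (F (z - y) - F z) ∂ν| := by
        rw [integral_sub hintG (integrable_const _), integral_const]
        simp [measure_univ]
    _ ≤ ∫ y, |F (z - y) - F z| ∂ν := by
        simpa [Real.norm_eq_abs] using norm_integral_le_integral_norm (fun y => F (z - y) - F z) (μ := ν)
    _ ≤ ∫ y, L0 * |y| ∂ν := by
        refine integral_mono (hintG.sub (integrable_const _)).abs (hintabs.const_mul L0)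
          (fun y => ?_)
        have := hlipAbs (z - y) z
        simpa using this
    _ = L0 * ∫ y, |y| ∂ν := integral_const_mul L0 _
    _ = L0 * ∫ ω, |Y ω| ∂μ := by rw [habsint]
end

section
/- (Approximation error of truncated return, expectation version) Let $(w_k)_{k\ge0}$ be i.i.d. in $\mathbb{R}^n$ with $\mathbb{E}[w_k^Tw_k] \le \sigma_0^2$ and $\mathbb{E}\|w_k\|_2 \le \mu_0$, let $P \succ 0$, $\gamma \in (0,1)$, $\|A_K\|_2 = \rho_K < 1$, $x \in \mathbb{R}^n$. Define $Y_N = \sum_{k=N}^{\infty} \gamma^{k+1} w_k^T P w_k + 2\sum_{k=N}^{\infty} \gamma^{k+1} w_k^T P A_K^{k+1} x + 2 \sum_{k=N}^{\infty} \gamma^{k+1} w_k^T P \sum_{\tau=0}^{k-1} A_K^{k-\tau} w_\tau$. Then $\mathbb{E}|Y_N| \le \gamma^N \Big( \lambda_{\max}(P) \sigma_0^2 \frac{\gamma}{1-\gamma} + 2 \mu_0 \|P\|_2 \|x\|_2 \frac{\gamma}{1-\gamma\rho_K} + 2 \mu_0^2 \|P\|_2 \frac{\gamma \rho_K}{(1-\gamma)(1-\rho_K)}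 \Big)$ for all $N \ge 1$. -/
/-!
Split `Y_N` into its three discounted tails and bound each in `L¹` term by term: a tail
`∑_{k ≥ N} γ^{k+1} g_k` with `E|g_k| ≤ C r^k`, `r ≤ 1`, has `E|·| ≤ γ^{N+1} C / (1 - γ r)`
by monotone convergence. The quadratic terms have `E|w_kᵀ P w_k| ≤ λ_max(P) σ₀²`; the terms in `x`
have `E|w_kᵀ P A^{k+1} x| ≤ ‖P‖ μ₀ ‖x‖ ρ^k`; in the cross terms `w_k` is independent of each
`w_τ`, `τ < k`, so `E|w_kᵀ P A^{k-τ} w_τ| ≤ ‖P‖ ρ^{k-τ} μ₀²`, and summing over `τ` gives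
`‖P‖ μ₀² ρ / (1 - ρ)`.
-/

open MeasureTheory ProbabilityTheory Matrix
open scoped Matrix.Norms.L2Operator

section LinearAlgebra

variable {ι : Type*} [Fintype ι]

lemma EuclideanSpace.norm_equiv_symm_eq_sqrt_dotProduct (v : ι → ℝ) :
    ‖(EuclideanSpace.equiv ι ℝ).symm v‖ = Real.sqrt (v ⬝ᵥ v) := by
  simp [EuclideanSpace.norm_eq, dotProduct, sq]

lemma Matrix.abs_dotProduct_mulVec_le [DecidableEq ι] (M : Matrix ι ι ℝ) (v u : ι → ℝ) :
    |v ⬝ᵥ M *ᵥ u| ≤ ‖M‖ * Real.sqrt (v ⬝ᵥ v) * Real.sqrt (u ⬝ᵥ u) := by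
  let e := (EuclideanSpace.equiv ι ℝ).symm
  have hinner : v ⬝ᵥ M *ᵥ u = inner ℝ (e v) (e (M *ᵥ u)) := by
    simp [e, PiLp.inner_apply, dotProduct, mul_comm]
  rw [hinner]
  calc |inner ℝ (e v) (e (M *ᵥ u))| ≤ ‖e v‖ * ‖e (M *ᵥ u)‖ := abs_real_inner_le_norm _ _
    _ ≤ ‖e v‖ * (‖M‖ * ‖e u‖) := by gcongr; exact M.l2_opNorm_mulVec (e u)
    _ = ‖M‖ * Real.sqrt (v ⬝ᵥ v) * Real.sqrt (u ⬝ᵥ u) := by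
      simp only [e, EuclideanSpace.norm_equiv_symm_eq_sqrt_dotProduct]; ring

lemma Matrix.norm_mul_pow_le [DecidableEq ι] (P A : Matrix ι ι ℝ) (k : ℕ) :
    ‖P * A ^ k‖ ≤ ‖P‖ * ‖A‖ ^ k := by
  induction k with
  | zero => simp
  | succ k ih =>
    rw [pow_succ, ← mul_assoc, pow_succ, ← mul_assoc]
    exact (norm_mul_le _ _).trans (mul_le_mul_of_nonneg_right ih (norm_nonneg _))

/-- Rayleigh bound: `(⨆ i, λᵢ) • 1 - A` is positive semidefinite, being `U (diag (λₘₐₓ - λᵢ)) Uᴴ`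
in an eigenbasis. -/
lemma Matrix.IsHermitian.dotProduct_mulVec_self_le [DecidableEq ι] {A : Matrix ι ι ℝ}
    (hA : A.IsHermitian) (v : ι → ℝ) : v ⬝ᵥ A *ᵥ v ≤ (⨆ i, hA.eigenvalues i) * (v ⬝ᵥ v) := by
  set L := ⨆ i, hA.eigenvalues i
  let U : Matrix ι ι ℝ := hA.eigenvectorUnitary
  have hdiag : (diagonal fun i => L - hA.eigenvalues i).PosSemidef :=
    posSemidef_diagonal_iff.mpr fun i => sub_nonneg.2 (le_ciSup (Finite.bddAbove_range _) i)
  have hUU : U * star U = 1 := (mem_unitaryGroup_iff).mp hA.eigenvectorUnitary.2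
  have hconj :
      L • (1 : Matrix ι ι ℝ) - A = U * diagonal (fun i => L - hA.eigenvalues i) * star U := by
    have hsub : diagonal (fun i => L - hA.eigenvalues i)
        = L • (1 : Matrix ι ι ℝ) - diagonal (RCLike.ofReal ∘ hA.eigenvalues) := by
      ext i j
      by_cases h : i = j <;> simp [h]
    conv_lhs => rw [hA.spectral_theorem, ← hUU]
    rw [hsub, Matrix.mul_sub, Matrix.sub_mul, mul_smul_comm, smul_mul_assoc, mul_one,
      mul_assoc, Unitary.conjStarAlgAut_apply, mul_assoc]
  have hpsd : (L • (1 : Matrix ι ι ℝ) - A).PosSemidef := by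
    rw [hconj]
    simpa [star_eq_conjTranspose] using hdiag.mul_mul_conjTranspose_same U
  simpa [sub_mulVec, smul_mulVec, sub_nonneg] using hpsd.dotProduct_mulVec_nonneg v

end LinearAlgebra

lemma sum_range_pow_sub_le {r : ℝ} (hr0 : 0 ≤ r) (hr1 : r < 1) (m : ℕ) :
    ∑ τ ∈ Finset.range m, r ^ (m - τ) ≤ r / (1 - r) := by
  have hreflect : ∑ τ ∈ Finset.range m, r ^ (m - τ) = r * ∑ j ∈ Finset.range m, r ^ j := by
    rw [Finset.mul_sum, ← Finset.sum_range_reflect]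
    refine Finset.sum_congr rfl fun τ hτ => ?_
    rw [← pow_succ']
    congr 1
    have := Finset.mem_range.mp hτ
    omega
  have hgeom : ∑ j ∈ Finset.range m, r ^ j ≤ 1 / (1 - r) := by
    rw [Finset.range_eq_Ico]
    simpa using geom_sum_Ico_le_of_lt_one (m := 0) (n := m) hr0 hr1
  rw [hreflect, ← mul_one_div]
  exact mul_le_mul_of_nonneg_left hgeom hr0

namespace MeasureTheory

variable {Ω : Type*} [MeasurableSpace Ω] {μ : Measure Ω}

lemma integrable_tsum_and_integral_norm_tsum_le {E : Type*} [NormedAddCommGroup E]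
    [NormedSpace ℝ E] [CompleteSpace E] [SecondCountableTopology E] [MeasurableSpace E]
    [BorelSpace E] {f : ℕ → Ω → E} {b : ℕ → ℝ} (hf : ∀ k, Integrable (f k) μ)
    (hfb : ∀ k, ∫ ω, ‖f k ω‖ ∂μ ≤ b k) (hb : Summable b) :
    Integrable (fun ω => ∑' k, f k ω) μ ∧ ∫ ω, ‖∑' k, f k ω‖ ∂μ ≤ ∑' k, b k := by
  have hb0 : ∀ k, 0 ≤ b k := fun k => (integral_nonneg fun _ => norm_nonneg _).trans (hfb k)
  have hmeas : AEStronglyMeasurable (fun ω => ∑' k, f k ω) μ :=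
    (AEMeasurable.tsum fun k => (hf k).aemeasurable).aestronglyMeasurable
  have hlintegral : ∫⁻ ω, ‖∑' k, f k ω‖ₑ ∂μ ≤ ENNReal.ofReal (∑' k, b k) :=
    calc ∫⁻ ω, ‖∑' k, f k ω‖ₑ ∂μ ≤ ∫⁻ ω, ∑' k, ‖f k ω‖ₑ ∂μ :=
          lintegral_mono fun _ => enorm_tsum_le_tsum_enorm
      _ = ∑' k, ENNReal.ofReal (∫ ω, ‖f k ω‖ ∂μ) := by
          rw [lintegral_tsum fun k => (hf k).aemeasurable.enorm]
          simp only [ofReal_integral_norm_eq_lintegral_enorm (hf _)]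
      _ ≤ ∑' k, ENNReal.ofReal (b k) :=
          ENNReal.tsum_le_tsum fun k => ENNReal.ofReal_le_ofReal (hfb k)
      _ = ENNReal.ofReal (∑' k, b k) := (ENNReal.ofReal_tsum_of_nonneg hb0 hb).symm
  refine ⟨⟨hmeas, hlintegral.trans_lt ENNReal.ofReal_lt_top⟩, ?_⟩
  rw [integral_norm_eq_lintegral_enorm hmeas]
  exact ENNReal.toReal_le_of_le_ofReal (tsum_nonneg hb0) hlintegral

lemma integrable_and_integral_abs_le_of_abs_le {f g : Ω → ℝ} (hf : AEStronglyMeasurable f μ)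
    (hg : Integrable g μ) (hfg : ∀ ω, |f ω| ≤ g ω) :
    Integrable f μ ∧ ∫ ω, |f ω| ∂μ ≤ ∫ ω, g ω ∂μ := by
  have hfi : Integrable f μ := hg.mono' hf (ae_of_all _ hfg)
  exact ⟨hfi, integral_mono hfi.abs hg hfg⟩

lemma integral_abs_add_le {f g : Ω → ℝ} (hf : Integrable f μ) (hg : Integrable g μ) :
    ∫ ω, |f ω + g ω| ∂μ ≤ ∫ ω, |f ω| ∂μ + ∫ ω, |g ω| ∂μ :=
  (integral_mono (hf.add hg).abs (hf.abs.add hg.abs) fun _ => abs_add_le _ _).trans_eq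
    (integral_add hf.abs hg.abs)

lemma integral_abs_const_mul (c : ℝ) (f : Ω → ℝ) :
    ∫ ω, |c * f ω| ∂μ = |c| * ∫ ω, |f ω| ∂μ := by
  simp only [abs_mul, integral_const_mul]

lemma integrable_and_integral_abs_discounted_tail_le {g : ℕ → Ω → ℝ} {C r γ : ℝ}
    (hγ0 : 0 ≤ γ) (hγ1 : γ < 1) (hr0 : 0 ≤ r) (hr1 : r ≤ 1) (hg : ∀ m, Integrable (g m) μ)
    (hgC : ∀ m, ∫ ω, |g m ω| ∂μ ≤ C * r ^ m) (N : ℕ) :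
    Integrable (fun ω => ∑' k, γ ^ (k + N + 1) * g (k + N) ω) μ ∧
      ∫ ω, |∑' k, γ ^ (k + N + 1) * g (k + N) ω| ∂μ ≤ γ ^ (N + 1) * C / (1 - γ * r) := by
  have hγr0 : 0 ≤ γ * r := mul_nonneg hγ0 hr0
  have hγr1 : γ * r < 1 := by nlinarith
  have hC : 0 ≤ C := by
    simpa using (integral_nonneg fun ω => abs_nonneg (g 0 ω)).trans (hgC 0)
  have hterm : ∀ k, ∫ ω, ‖γ ^ (k + N + 1) * g (k + N) ω‖ ∂μ ≤ γ ^ (N + 1) * C * (γ * r) ^ k := by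
    intro k
    have hrN : r ^ (k + N) ≤ r ^ k := pow_le_pow_of_le_one hr0 hr1 (Nat.le_add_right k N)
    simp only [Real.norm_eq_abs, abs_mul, abs_pow, abs_of_nonneg hγ0]
    rw [integral_const_mul]
    calc γ ^ (k + N + 1) * ∫ ω, |g (k + N) ω| ∂μ ≤ γ ^ (k + N + 1) * (C * r ^ k) := by
          gcongr
          exact (hgC _).trans (mul_le_mul_of_nonneg_left hrN hC)
      _ = γ ^ (N + 1) * C * (γ * r) ^ k := by ring
  have h := integrable_tsum_and_integral_norm_tsum_le (fun k => (hg (k + N)).const_mul _) hterm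
    ((summable_geometric_of_lt_one hγr0 hγr1).mul_left _)
  rw [tsum_mul_left, tsum_geometric_of_lt_one hγr0 hγr1] at h
  simpa only [Real.norm_eq_abs, div_eq_mul_inv] using h

end MeasureTheory

section RandomVectors

variable {Ω ι : Type*} [MeasurableSpace Ω] {μ : Measure Ω} [Fintype ι]
  {X Y : Ω → ι → ℝ}

lemma integrable_sqrt_dotProduct_self [IsFiniteMeasure μ]
    (hX : Integrable (fun ω => X ω ⬝ᵥ X ω) μ) :
    Integrable (fun ω => Real.sqrt (X ω ⬝ᵥ X ω)) μ := by
  refine ((integrable_const 1).add hX).mono'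
    (Real.continuous_sqrt.comp_aestronglyMeasurable hX.1) (ae_of_all _ fun ω => ?_)
  have h0 : 0 ≤ X ω ⬝ᵥ X ω := Finset.sum_nonneg fun i _ => mul_self_nonneg _
  change ‖Real.sqrt (X ω ⬝ᵥ X ω)‖ ≤ 1 + X ω ⬝ᵥ X ω
  rw [Real.norm_of_nonneg (Real.sqrt_nonneg _)]
  nlinarith [Real.sq_sqrt h0, Real.sqrt_nonneg (X ω ⬝ᵥ X ω)]

lemma integrable_and_integral_abs_dotProduct_mulVec_self_le [DecidableEq ι] {P : Matrix ι ι ℝ}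
    (hP : P.PosSemidef) (hXm : Measurable X) (hX : Integrable (fun ω => X ω ⬝ᵥ X ω) μ) :
    Integrable (fun ω => X ω ⬝ᵥ P *ᵥ X ω) μ ∧
      ∫ ω, |X ω ⬝ᵥ P *ᵥ X ω| ∂μ ≤ (⨆ i, hP.1.eigenvalues i) * ∫ ω, X ω ⬝ᵥ X ω ∂μ := by
  rw [← integral_const_mul]
  refine integrable_and_integral_abs_le_of_abs_le (by fun_prop) (hX.const_mul _) fun ω => ?_
  rw [abs_of_nonneg (by simpa using hP.dotProduct_mulVec_nonneg (X ω))]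
  exact hP.1.dotProduct_mulVec_self_le _

lemma integrable_and_integral_abs_dotProduct_mulVec_const_le [DecidableEq ι] (M : Matrix ι ι ℝ)
    (x : ι → ℝ) (hXm : Measurable X) (hX : Integrable (fun ω => Real.sqrt (X ω ⬝ᵥ X ω)) μ) :
    Integrable (fun ω => X ω ⬝ᵥ M *ᵥ x) μ ∧
      ∫ ω, |X ω ⬝ᵥ M *ᵥ x| ∂μ ≤ ‖M‖ * (∫ ω, Real.sqrt (X ω ⬝ᵥ X ω) ∂μ) * Real.sqrt (x ⬝ᵥ x) := by
  rw [← integral_const_mul, ← integral_mul_const]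
  exact integrable_and_integral_abs_le_of_abs_le (by fun_prop)
    ((hX.const_mul _).mul_const _) fun ω => M.abs_dotProduct_mulVec_le _ _

lemma integrable_and_integral_abs_dotProduct_mul_pow_succ_mulVec_le [DecidableEq ι]
    (P A : Matrix ι ι ℝ) (hA : ‖A‖ ≤ 1) (x : ι → ℝ) (hXm : Measurable X)
    (hX : Integrable (fun ω => Real.sqrt (X ω ⬝ᵥ X ω)) μ) (m : ℕ) :
    Integrable (fun ω => X ω ⬝ᵥ (P * A ^ (m + 1)) *ᵥ x) μ ∧
      ∫ ω, |X ω ⬝ᵥ (P * A ^ (m + 1)) *ᵥ x| ∂μ ≤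
        (‖P‖ * (∫ ω, Real.sqrt (X ω ⬝ᵥ X ω) ∂μ) * Real.sqrt (x ⬝ᵥ x)) * ‖A‖ ^ m := by
  obtain ⟨hint, hbound⟩ := integrable_and_integral_abs_dotProduct_mulVec_const_le _ x hXm hX
  refine ⟨hint, hbound.trans ?_⟩
  have hPA : ‖P * A ^ (m + 1)‖ ≤ ‖P‖ * ‖A‖ ^ m :=
    (P.norm_mul_pow_le A _).trans (mul_le_mul_of_nonneg_left
      (pow_le_pow_of_le_one (norm_nonneg A) hA m.le_succ) (norm_nonneg P))
  calc ‖P * A ^ (m + 1)‖ * (∫ ω, Real.sqrt (X ω ⬝ᵥ X ω) ∂μ) * Real.sqrt (x ⬝ᵥ x)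
      ≤ (‖P‖ * ‖A‖ ^ m) * (∫ ω, Real.sqrt (X ω ⬝ᵥ X ω) ∂μ) * Real.sqrt (x ⬝ᵥ x) := by
        gcongr
    _ = _ := by ring

lemma ProbabilityTheory.IndepFun.integrable_and_integral_abs_dotProduct_mulVec_le
    [DecidableEq ι] (hXY : IndepFun X Y μ) (M : Matrix ι ι ℝ) (hXm : Measurable X)
    (hYm : Measurable Y) (hX : Integrable (fun ω => Real.sqrt (X ω ⬝ᵥ X ω)) μ)
    (hY : Integrable (fun ω => Real.sqrt (Y ω ⬝ᵥ Y ω)) μ) :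
    Integrable (fun ω => X ω ⬝ᵥ M *ᵥ Y ω) μ ∧
      ∫ ω, |X ω ⬝ᵥ M *ᵥ Y ω| ∂μ ≤
        ‖M‖ * (∫ ω, Real.sqrt (X ω ⬝ᵥ X ω) ∂μ) * ∫ ω, Real.sqrt (Y ω ⬝ᵥ Y ω) ∂μ := by
  have hnorm : Measurable fun v : ι → ℝ => Real.sqrt (v ⬝ᵥ v) := by fun_prop
  have hind : IndepFun (fun ω => Real.sqrt (X ω ⬝ᵥ X ω)) (fun ω => Real.sqrt (Y ω ⬝ᵥ Y ω)) μ :=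
    hXY.comp hnorm hnorm
  rw [mul_assoc, ← hind.integral_fun_mul_eq_mul_integral hX.1 hY.1, ← integral_const_mul]
  refine integrable_and_integral_abs_le_of_abs_le (by fun_prop)
    ((hind.integrable_mul hX hY).const_mul _) fun ω => ?_
  simpa only [mul_assoc] using M.abs_dotProduct_mulVec_le (X ω) (Y ω)

lemma integrable_and_integral_abs_dotProduct_mulVec_sum_le [DecidableEq ι] {w : ℕ → Ω → ι → ℝ}
    {μ0 : ℝ} (P A : Matrix ι ι ℝ) (hA : ‖A‖ < 1) (hwm : ∀ t, Measurable (w t))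
    (hindep : iIndepFun w μ) (hw : ∀ t, Integrable (fun ω => Real.sqrt (w t ω ⬝ᵥ w t ω)) μ)
    (hμ0 : ∀ t, ∫ ω, Real.sqrt (w t ω ⬝ᵥ w t ω) ∂μ ≤ μ0) (m : ℕ) :
    Integrable (fun ω => w m ω ⬝ᵥ P *ᵥ ∑ τ ∈ Finset.range m, A ^ (m - τ) *ᵥ w τ ω) μ ∧
      ∫ ω, |w m ω ⬝ᵥ P *ᵥ ∑ τ ∈ Finset.range m, A ^ (m - τ) *ᵥ w τ ω| ∂μ ≤
        ‖P‖ * μ0 ^ 2 * (‖A‖ / (1 - ‖A‖)) := by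
  have hmean0 : ∀ t, 0 ≤ ∫ ω, Real.sqrt (w t ω ⬝ᵥ w t ω) ∂μ := fun t =>
    integral_nonneg fun _ => Real.sqrt_nonneg _
  have hμ0_nonneg : 0 ≤ μ0 := (hmean0 0).trans (hμ0 0)
  have hpair : ∀ τ ∈ Finset.range m,
      Integrable (fun ω => w m ω ⬝ᵥ (P * A ^ (m - τ)) *ᵥ w τ ω) μ ∧
        ∫ ω, |w m ω ⬝ᵥ (P * A ^ (m - τ)) *ᵥ w τ ω| ∂μ ≤ ‖P‖ * μ0 ^ 2 * ‖A‖ ^ (m - τ) := by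
    intro τ hτ
    have hne : m ≠ τ := (Finset.mem_range.mp hτ).ne'
    obtain ⟨hint, hbound⟩ := (hindep.indepFun hne).integrable_and_integral_abs_dotProduct_mulVec_le
      (P * A ^ (m - τ)) (hwm m) (hwm τ) (hw m) (hw τ)
    refine ⟨hint, hbound.trans ?_⟩
    calc ‖P * A ^ (m - τ)‖ * (∫ ω, Real.sqrt (w m ω ⬝ᵥ w m ω) ∂μ) *
          ∫ ω, Real.sqrt (w τ ω ⬝ᵥ w τ ω) ∂μ ≤ (‖P‖ * ‖A‖ ^ (m - τ)) * μ0 * μ0 :=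
          mul_le_mul (mul_le_mul (P.norm_mul_pow_le A _) (hμ0 m) (hmean0 m) (by positivity))
            (hμ0 τ) (hmean0 τ) (by positivity)
      _ = ‖P‖ * μ0 ^ 2 * ‖A‖ ^ (m - τ) := by ring
  have hexpand : ∀ ω, w m ω ⬝ᵥ P *ᵥ ∑ τ ∈ Finset.range m, A ^ (m - τ) *ᵥ w τ ω =
      ∑ τ ∈ Finset.range m, w m ω ⬝ᵥ (P * A ^ (m - τ)) *ᵥ w τ ω := fun ω => by
    simp only [mulVec_sum, dotProduct_sum, mulVec_mulVec]
  simp only [hexpand]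
  obtain ⟨hint, hbound⟩ := integrable_and_integral_abs_le_of_abs_le
    (integrable_finsetSum _ fun τ hτ => (hpair τ hτ).1).1
    (integrable_finsetSum _ fun τ hτ => (hpair τ hτ).1.abs) fun ω => Finset.abs_sum_le_sum_abs _ _
  refine ⟨hint, hbound.trans ?_⟩
  rw [integral_finsetSum _ fun τ hτ => (hpair τ hτ).1.abs]
  calc ∑ τ ∈ Finset.range m, ∫ ω, |w m ω ⬝ᵥ (P * A ^ (m - τ)) *ᵥ w τ ω| ∂μ
      ≤ ∑ τ ∈ Finset.range m, ‖P‖ * μ0 ^ 2 * ‖A‖ ^ (m - τ) :=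
        Finset.sum_le_sum fun τ hτ => (hpair τ hτ).2
    _ ≤ ‖P‖ * μ0 ^ 2 * (‖A‖ / (1 - ‖A‖)) := by
        rw [← Finset.mul_sum]
        gcongr
        exact sum_range_pow_sub_le (norm_nonneg A) hA m

end RandomVectors

theorem stmt_12_general {Ω : Type*} [MeasurableSpace Ω] (μ : Measure Ω) [IsProbabilityMeasure μ]
    {n : ℕ} (P A : Matrix (Fin n) (Fin n) ℝ) (hP : P.PosDef)
    (ρ : ℝ) (hρ : ‖A‖ = ρ) (hρ1 : ρ < 1)
    (γ σ0 μ0 : ℝ) (hγ0 : 0 < γ) (hγ1 : γ < 1) (x : Fin n → ℝ)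
    (w : ℕ → Ω → (Fin n → ℝ)) (hwm : ∀ t, Measurable (w t))
    (hindep : iIndepFun w μ)
    (hmom2 : ∀ t, Integrable (fun ω => w t ω ⬝ᵥ w t ω) μ)
    (hσ : ∀ t, ∫ ω, w t ω ⬝ᵥ w t ω ∂μ ≤ σ0 ^ 2)
    (hμ0 : ∀ t, ∫ ω, Real.sqrt (w t ω ⬝ᵥ w t ω) ∂μ ≤ μ0) :
    ∀ N : ℕ, 1 ≤ N →
      ∀ Y : Ω → ℝ,
        Y = (fun ω =>
          (∑' k : ℕ, γ ^ (k + N + 1) * (w (k + N) ω ⬝ᵥ P *ᵥ w (k + N) ω))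
          + 2 * (∑' k : ℕ, γ ^ (k + N + 1) *
              (w (k + N) ω ⬝ᵥ (P * A ^ (k + N + 1)) *ᵥ x))
          + 2 * (∑' k : ℕ, γ ^ (k + N + 1) *
              (w (k + N) ω ⬝ᵥ P *ᵥ
                ∑ τ ∈ Finset.range (k + N), (A ^ (k + N - τ)) *ᵥ w τ ω))) →
        Integrable Y μ ∧
        ∫ ω, |Y ω| ∂μ ≤ γ ^ N *
          ((⨆ i, hP.1.eigenvalues i) * σ0 ^ 2 * (γ / (1 - γ))
            + 2 * μ0 * ‖P‖ * Real.sqrt (x ⬝ᵥ x) * (γ / (1 - γ * ρ))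
            + 2 * μ0 ^ 2 * ‖P‖ * (γ * ρ / ((1 - γ) * (1 - ρ)))) := by
  intro N _ Y hY
  subst hY hρ
  set L := ⨆ i, hP.1.eigenvalues i
  have hL : 0 ≤ L := Real.iSup_nonneg fun i => hP.posSemidef.eigenvalues_nonneg i
  have hw : ∀ t, Integrable (fun ω => Real.sqrt (w t ω ⬝ᵥ w t ω)) μ := fun t =>
    integrable_sqrt_dotProduct_self (hmom2 t)
  have hquad := fun m =>
    integrable_and_integral_abs_dotProduct_mulVec_self_le hP.posSemidef (hwm m) (hmom2 m)
  have hlin := fun m => integrable_and_integral_abs_dotProduct_mul_pow_succ_mulVec_le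
    P A hρ1.le x (hwm m) (hw m) m
  have hcross := integrable_and_integral_abs_dotProduct_mulVec_sum_le P A hρ1 hwm hindep hw hμ0
  obtain ⟨hI₁, hB₁⟩ := integrable_and_integral_abs_discounted_tail_le (C := L * σ0 ^ 2)
    hγ0.le hγ1 zero_le_one le_rfl (fun m => (hquad m).1) (fun m => by
      simpa using (hquad m).2.trans (mul_le_mul_of_nonneg_left (hσ m) hL)) N
  obtain ⟨hI₂, hB₂⟩ := integrable_and_integral_abs_discounted_tail_le
    (C := ‖P‖ * μ0 * Real.sqrt (x ⬝ᵥ x)) hγ0.le hγ1 (norm_nonneg A) hρ1.le (fun m => (hlin m).1)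
    (fun m => (hlin m).2.trans (by gcongr; exact hμ0 m)) N
  obtain ⟨hI₃, hB₃⟩ := integrable_and_integral_abs_discounted_tail_le
    (C := ‖P‖ * μ0 ^ 2 * (‖A‖ / (1 - ‖A‖))) hγ0.le hγ1 zero_le_one le_rfl
    (fun m => (hcross m).1) (fun m => by simpa using (hcross m).2) N
  have hI₁₂ := hI₁.fun_add (hI₂.const_mul 2)
  refine ⟨hI₁₂.fun_add (hI₃.const_mul 2), ?_⟩
  refine (integral_abs_add_le hI₁₂ (hI₃.const_mul 2)).trans ?_
  grw [integral_abs_add_le hI₁ (hI₂.const_mul 2)]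
  have hsum : γ ^ N * (L * σ0 ^ 2 * (γ / (1 - γ))
      + 2 * μ0 * ‖P‖ * Real.sqrt (x ⬝ᵥ x) * (γ / (1 - γ * ‖A‖))
      + 2 * μ0 ^ 2 * ‖P‖ * (γ * ‖A‖ / ((1 - γ) * (1 - ‖A‖)))) =
      γ ^ (N + 1) * (L * σ0 ^ 2) / (1 - γ * 1)
      + 2 * (γ ^ (N + 1) * (‖P‖ * μ0 * Real.sqrt (x ⬝ᵥ x)) / (1 - γ * ‖A‖))
      + 2 * (γ ^ (N + 1) * (‖P‖ * μ0 ^ 2 * (‖A‖ / (1 - ‖A‖))) / (1 - γ * 1)) := by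
    rw [mul_one, div_eq_mul_inv _ ((1 - γ) * _), mul_inv]; ring
  rw [integral_abs_const_mul, integral_abs_const_mul, abs_two, hsum]
  linarith

/-- Expectation bound for the truncation tail `Y_N` of the random return:
`E|Y_N| ≤ γ^N ( λ_max(P) σ₀² γ/(1-γ) + 2 μ₀ ‖P‖₂ ‖x‖₂ γ/(1-γρ)
              + 2 μ₀² ‖P‖₂ γρ/((1-γ)(1-ρ)) )` for all `N ≥ 1`. -/
theorem stmt_12 {Ω : Type*} [MeasurableSpace Ω] (μ : Measure Ω) [IsProbabilityMeasure μ]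
    {n : ℕ} (P A : Matrix (Fin n) (Fin n) ℝ) (hP : P.PosDef)
    (ρ : ℝ) (hρ : ‖A‖ = ρ) (hρ1 : ρ < 1)
    (γ σ0 μ0 : ℝ) (hγ0 : 0 < γ) (hγ1 : γ < 1) (x : Fin n → ℝ)
    (w : ℕ → Ω → (Fin n → ℝ)) (hwm : ∀ t, Measurable (w t))
    (hindep : iIndepFun w μ)
    (hid : ∀ s t, IdentDistrib (w s) (w t) μ μ)
    (hmom2 : ∀ t, Integrable (fun ω => w t ω ⬝ᵥ w t ω) μ)
    (hσ : ∀ t, ∫ ω, w t ω ⬝ᵥ w t ω ∂μ ≤ σ0 ^ 2)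
    (hμ0 : ∀ t, ∫ ω, Real.sqrt (w t ω ⬝ᵥ w t ω) ∂μ ≤ μ0) :
    ∀ N : ℕ, 1 ≤ N →
      ∀ Y : Ω → ℝ,
        Y = (fun ω =>
          (∑' k : ℕ, γ ^ (k + N + 1) * (w (k + N) ω ⬝ᵥ P *ᵥ w (k + N) ω))
          + 2 * (∑' k : ℕ, γ ^ (k + N + 1) *
              (w (k + N) ω ⬝ᵥ (P * A ^ (k + N + 1)) *ᵥ x))
          + 2 * (∑' k : ℕ, γ ^ (k + N + 1) *
              (w (k + N) ω ⬝ᵥ P *ᵥ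
                ∑ τ ∈ Finset.range (k + N), (A ^ (k + N - τ)) *ᵥ w τ ω))) →
        Integrable Y μ ∧
        ∫ ω, |Y ω| ∂μ ≤ γ ^ N *
          ((⨆ i, hP.1.eigenvalues i) * σ0 ^ 2 * (γ / (1 - γ))
            + 2 * μ0 * ‖P‖ * Real.sqrt (x ⬝ᵥ x) * (γ / (1 - γ * ρ))
            + 2 * μ0 ^ 2 * ‖P‖ * (γ * ρ / ((1 - γ) * (1 - ρ)))) :=
  stmt_12_general μ P A hP ρ hρ hρ1 γ σ0 μ0 hγ0 hγ1 x w hwm hindep hmom2 hσ hμ0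
end
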